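/- arXiv:0806.4344 — 6 statements merged into one kernel-verified Lean document; each statement's English description precedes it below -/
import Mathlib

section
/- For every three-player game in which each player's strategy set is Fin n with n ≥ 2 and Player 1's payoff function u₁ : Fin n × Fin n × Fin n → ℝ takes values in [0,1], and for every ε > 0, setting m = ⌈(ln n)/(2ε²)⌉, there exist functions f₂, f₃ : Fin m → Fin n such that the mixed strategies σ₂, σ₃ defined by σᵢ(j) = |{t ∈ Fin m : fᵢ(t) = j}|/m satisfy max_{a ∈ Fin n} ∑_{j,k} σ₂(j)·σ₃(k)·u₁(a,j,k) ≤ v + 2ε, where v is the minmax value for Player 1. -/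
/-- A mixed strategy on a finite strategy set `S`. -/
def IsMixedStrategy {S : Type*} [Fintype S] (σ : S → ℝ) : Prop :=
  (∀ s, 0 ≤ σ s) ∧ ∑ s, σ s = 1

/-- The minmax (threat) value for Player 1 of the three-player game with payoff `u`:
the minimum over mixed strategy profiles of Players 2 and 3 of the best-response
payoff of Player 1 (the minimum is attained, so `sInf` is a minimum). -/
noncomputable def minmaxVal {S₁ S₂ S₃ : Type*} [Fintype S₁] [Fintype S₂] [Fintype S₃]
    (u : S₁ × S₂ × S₃ → ℝ) : ℝ :=
  sInf { v | ∃ σ₂ : S₂ → ℝ, ∃ σ₃ : S₃ → ℝ,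
    IsMixedStrategy σ₂ ∧ IsMixedStrategy σ₃ ∧
    v = ⨆ a : S₁, ∑ j : S₂, ∑ k : S₃, σ₂ j * σ₃ k * u (a, j, k) }

/-!
Fix mixed strategies `σ₂, σ₃` whose best-response payoff is within `δ` of the minmax value.
Draw `m` independent samples from `σ₂`. For a fixed action of Player 1, Hoeffding's inequality
bounds the probability that the payoff against the empirical distribution of the samples exceeds
the payoff against `σ₂` by `t` by `exp (-2 m t²)`, which is less than `1 / n` as soon as `t > ε`;
a union bound over the `n` actions yields one sample that works for all actions at once.
Doing the same for Player 3, against the empirical strategy already chosen for Player 2, costs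
another `t`. Since there are only finitely many pairs of samples, one of them is good for every
`δ > 0`, and the bound `v + 2ε` follows.
-/

open Real MeasureTheory ProbabilityTheory

theorem measureReal_pi_sum_sub_integral_ge_le {Ω : Type*} [MeasurableSpace Ω] (ν : Measure Ω)
    [IsProbabilityMeasure ν] {g : Ω → ℝ} (hg : Measurable g) (hg01 : ∀ x, g x ∈ Set.Icc 0 1)
    (m : ℕ) {t : ℝ} (ht : 0 ≤ t) :
    (Measure.pi fun _ : Fin m => ν).real {ω | m * t ≤ ∑ i, (g (ω i) - ∫ x, g x ∂ν)}
      ≤ exp (-2 * m * t ^ 2) := by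
  have hindep : iIndepFun (fun i (ω : Fin m → Ω) => g (ω i) - ∫ x, g x ∂ν)
      (Measure.pi fun _ => ν) :=
    iIndepFun_pi (X := fun _ x => g x - ∫ x, g x ∂ν) fun _ => (hg.sub_const _).aemeasurable
  have hsubG (i : Fin m) : HasSubgaussianMGF (fun ω : Fin m → Ω => g (ω i) - ∫ x, g x ∂ν)
      ((‖(1 : ℝ) - 0‖₊ / 2) ^ 2) (Measure.pi fun _ => ν) :=
    HasSubgaussianMGF.of_map (Y := fun ω : Fin m → Ω => ω i) (X := fun x => g x - ∫ x, g x ∂ν)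
      (measurable_pi_apply i).aemeasurable (by
        rw [(measurePreserving_eval (fun _ => ν) i).map_eq]
        exact hasSubgaussianMGF_of_mem_Icc hg.aemeasurable (.of_forall hg01))
  refine (HasSubgaussianMGF.measure_sum_ge_le_of_iIndepFun hindep (s := Finset.univ)
    (fun i _ => hsubG i) (mul_nonneg m.cast_nonneg ht)).trans_eq ?_
  rcases m.eq_zero_or_pos with rfl | hm
  · simp
  · congr 1
    simp only [sub_zero, nnnorm_one, one_div, inv_pow, Finset.sum_const, Finset.card_univ,
      Fintype.card_fin, nsmul_eq_mul, NNReal.coe_mul, NNReal.coe_natCast, NNReal.coe_inv,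
      NNReal.coe_pow, NNReal.coe_ofNat, neg_mul]
    field_simp

theorem exists_forall_sum_sub_integral_lt {Ω ι : Type*} [MeasurableSpace Ω] [Fintype ι]
    (ν : Measure Ω) [IsProbabilityMeasure ν] {h : ι → Ω → ℝ} (hh : ∀ a, Measurable (h a))
    (hh01 : ∀ a x, h a x ∈ Set.Icc 0 1) (m : ℕ) {t : ℝ} (ht : 0 ≤ t)
    (hcard : Fintype.card ι * exp (-2 * m * t ^ 2) < 1) :
    ∃ ω : Fin m → Ω, ∀ a, ∑ i, (h a (ω i) - ∫ x, h a x ∂ν) < m * t := by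
  by_contra! hbad
  set μ := Measure.pi fun _ : Fin m => ν
  have hcover : ⋃ a, {ω : Fin m → Ω | m * t ≤ ∑ i, (h a (ω i) - ∫ x, h a x ∂ν)} = Set.univ :=
    Set.eq_univ_of_forall fun ω => Set.mem_iUnion.2 (hbad ω)
  have := calc
    (1 : ℝ) = μ.real (⋃ a, {ω | m * t ≤ ∑ i, (h a (ω i) - ∫ x, h a x ∂ν)}) := by
      rw [hcover, probReal_univ]
    _ ≤ ∑ a, μ.real {ω | m * t ≤ ∑ i, (h a (ω i) - ∫ x, h a x ∂ν)} :=
      measureReal_iUnion_fintype_le _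
    _ ≤ ∑ _a : ι, exp (-2 * m * t ^ 2) :=
      Finset.sum_le_sum fun a _ =>
        measureReal_pi_sum_sub_integral_ge_le ν (hh a) (hh01 a) m ht
    _ = Fintype.card ι * exp (-2 * m * t ^ 2) := by simp
  linarith

namespace IsMixedStrategy

variable {S : Type*} [Fintype S] {σ : S → ℝ}

theorem sum_mul_mem_Icc (hσ : IsMixedStrategy σ) {g : S → ℝ} (hg : ∀ s, g s ∈ Set.Icc 0 1) :
    ∑ s, σ s * g s ∈ Set.Icc 0 1 := by
  refine ⟨Finset.sum_nonneg fun s _ => mul_nonneg (hσ.1 s) (hg s).1, ?_⟩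
  calc ∑ s, σ s * g s ≤ ∑ s, σ s := Finset.sum_le_sum fun s _ =>
        mul_le_of_le_one_right (hσ.1 s) (hg s).2
    _ = 1 := hσ.2

noncomputable def toPMF (hσ : IsMixedStrategy σ) : PMF S :=
  PMF.ofFintype (fun s => ENNReal.ofReal (σ s)) (by
    rw [← ENNReal.ofReal_sum_of_nonneg fun s _ => hσ.1 s, hσ.2, ENNReal.ofReal_one])

theorem integral_toPMF [MeasurableSpace S] [MeasurableSingletonClass S]
    (hσ : IsMixedStrategy σ) (g : S → ℝ) :
    ∫ s, g s ∂hσ.toPMF.toMeasure = ∑ s, σ s * g s := by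
  simp [PMF.integral_eq_sum, toPMF, ENNReal.toReal_ofReal (hσ.1 _)]

end IsMixedStrategy

noncomputable def empiricalStrategy {S : Type*} [DecidableEq S] {m : ℕ} (f : Fin m → S)
    (s : S) : ℝ :=
  ((Finset.univ.filter fun t => f t = s).card : ℝ) / m

section Empirical

variable {S : Type*} [Fintype S] [DecidableEq S] {m : ℕ}

theorem sum_empiricalStrategy_mul (f : Fin m → S) (g : S → ℝ) :
    ∑ s, empiricalStrategy f s * g s = (∑ i, g (f i)) / m := by
  rw [← Finset.sum_fiberwise Finset.univ f (fun i => g (f i)), Finset.sum_div]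
  refine Finset.sum_congr rfl fun s _ => ?_
  rw [Finset.sum_congr rfl fun i hi => by rw [(Finset.mem_filter.1 hi).2], Finset.sum_const,
    nsmul_eq_mul, empiricalStrategy]
  ring

theorem isMixedStrategy_empiricalStrategy (hm : 0 < m) (f : Fin m → S) :
    IsMixedStrategy (empiricalStrategy f) := by
  refine ⟨fun s => by unfold empiricalStrategy; positivity, ?_⟩
  simpa [hm.ne'] using sum_empiricalStrategy_mul f fun _ => 1

theorem IsMixedStrategy.exists_sum_empiricalStrategy_mul_lt {ι : Type*} [Fintype ι]
    {σ : S → ℝ} (hσ : IsMixedStrategy σ) {h : ι → S → ℝ} (hh01 : ∀ a s, h a s ∈ Set.Icc 0 1)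
    (hm : 0 < m) {t : ℝ} (ht : 0 ≤ t) (hcard : Fintype.card ι * exp (-2 * m * t ^ 2) < 1) :
    ∃ f : Fin m → S, ∀ a, ∑ s, empiricalStrategy f s * h a s < ∑ s, σ s * h a s + t := by
  let _ : MeasurableSpace S := ⊤
  have : DiscreteMeasurableSpace S := ⟨fun _ => trivial⟩
  obtain ⟨f, hf⟩ := exists_forall_sum_sub_integral_lt hσ.toPMF.toMeasure
    (fun a => measurable_of_countable (h a)) hh01 m ht hcard
  refine ⟨f, fun a => ?_⟩
  have hma : (0 : ℝ) < m := by exact_mod_cast hm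
  have := hf a
  rw [hσ.integral_toPMF, Finset.sum_sub_distrib, Finset.sum_const, Finset.card_univ,
    Fintype.card_fin, nsmul_eq_mul] at this
  rw [sum_empiricalStrategy_mul, div_lt_iff₀ hma]
  linarith

end Empirical

section Game

variable {S₁ S₂ S₃ : Type*} [Fintype S₂] [Fintype S₃]

def expectedPayoff (u : S₁ × S₂ × S₃ → ℝ) (σ₂ : S₂ → ℝ) (σ₃ : S₃ → ℝ) (a : S₁) : ℝ :=
  ∑ j, ∑ k, σ₂ j * σ₃ k * u (a, j, k)

theorem expectedPayoff_eq_sum_mul_left (u : S₁ × S₂ × S₃ → ℝ) (σ₂ : S₂ → ℝ) (σ₃ : S₃ → ℝ)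
    (a : S₁) : expectedPayoff u σ₂ σ₃ a = ∑ j, σ₂ j * ∑ k, σ₃ k * u (a, j, k) := by
  simp only [expectedPayoff, Finset.mul_sum, mul_assoc]

theorem expectedPayoff_eq_sum_mul_right (u : S₁ × S₂ × S₃ → ℝ) (σ₂ : S₂ → ℝ) (σ₃ : S₃ → ℝ)
    (a : S₁) : expectedPayoff u σ₂ σ₃ a = ∑ k, σ₃ k * ∑ j, σ₂ j * u (a, j, k) := by
  rw [expectedPayoff, Finset.sum_comm]
  simp only [Finset.mul_sum]
  exact Finset.sum_congr rfl fun k _ => Finset.sum_congr rfl fun j _ => by ring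

theorem exists_expectedPayoff_lt_minmaxVal_add [Fintype S₁] [Nonempty S₂] [Nonempty S₃]
    (u : S₁ × S₂ × S₃ → ℝ) {δ : ℝ} (hδ : 0 < δ) :
    ∃ σ₂ σ₃, IsMixedStrategy σ₂ ∧ IsMixedStrategy σ₃ ∧
      ∀ a, expectedPayoff u σ₂ σ₃ a < minmaxVal u + δ := by
  classical
  have hne : Set.Nonempty { v | ∃ σ₂ : S₂ → ℝ, ∃ σ₃ : S₃ → ℝ,
      IsMixedStrategy σ₂ ∧ IsMixedStrategy σ₃ ∧
      v = ⨆ a : S₁, ∑ j : S₂, ∑ k : S₃, σ₂ j * σ₃ k * u (a, j, k) } :=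
    ⟨_, _, _, isMixedStrategy_empiricalStrategy one_pos fun _ => Classical.arbitrary S₂,
      isMixedStrategy_empiricalStrategy one_pos fun _ => Classical.arbitrary S₃, rfl⟩
  obtain ⟨_, ⟨σ₂, σ₃, hσ₂, hσ₃, rfl⟩, hlt⟩ := Real.lt_sInf_add_pos hne hδ
  exact ⟨σ₂, σ₃, hσ₂, hσ₃, fun a => (le_ciSup (Finite.bddAbove_range _) a).trans_lt hlt⟩

theorem exists_expectedPayoff_empiricalStrategy_lt [Fintype S₁] [DecidableEq S₂] [DecidableEq S₃]
    {u : S₁ × S₂ × S₃ → ℝ} (hu : ∀ x, u x ∈ Set.Icc 0 1) {σ₂ : S₂ → ℝ} {σ₃ : S₃ → ℝ}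
    (hσ₂ : IsMixedStrategy σ₂) (hσ₃ : IsMixedStrategy σ₃) {c : ℝ}
    (hc : ∀ a, expectedPayoff u σ₂ σ₃ a ≤ c) {m : ℕ} (hm : 0 < m) {t : ℝ} (ht : 0 ≤ t)
    (hcard : Fintype.card S₁ * exp (-2 * m * t ^ 2) < 1) :
    ∃ (f₂ : Fin m → S₂) (f₃ : Fin m → S₃),
      ∀ a, expectedPayoff u (empiricalStrategy f₂) (empiricalStrategy f₃) a < c + 2 * t := by
  obtain ⟨f₂, hf₂⟩ := hσ₂.exists_sum_empiricalStrategy_mul_lt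
    (fun a j => hσ₃.sum_mul_mem_Icc fun k => hu (a, j, k)) hm ht hcard
  obtain ⟨f₃, hf₃⟩ := hσ₃.exists_sum_empiricalStrategy_mul_lt
    (fun a k => (isMixedStrategy_empiricalStrategy hm f₂).sum_mul_mem_Icc fun j => hu (a, j, k))
    hm ht hcard
  refine ⟨f₂, f₃, fun a => ?_⟩
  have h₂ : expectedPayoff u (empiricalStrategy f₂) σ₃ a < expectedPayoff u σ₂ σ₃ a + t := by
    simpa only [expectedPayoff_eq_sum_mul_left] using hf₂ a
  have h₃ : expectedPayoff u (empiricalStrategy f₂) (empiricalStrategy f₃) a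
      < expectedPayoff u (empiricalStrategy f₂) σ₃ a + t := by
    simpa only [expectedPayoff_eq_sum_mul_right] using hf₃ a
  linarith [hc a]

end Game

theorem natCast_mul_exp_neg_lt_one {n m : ℕ} (hn : 1 < n) {ε t : ℝ} (hε : 0 < ε) (hεt : ε < t)
    (hm : Real.log n / (2 * ε ^ 2) ≤ m) : (n : ℝ) * exp (-2 * m * t ^ 2) < 1 := by
  have hlog : 0 < Real.log n := Real.log_pos (by exact_mod_cast hn)
  have hlog_le : Real.log n ≤ 2 * m * ε ^ 2 := by
    rw [div_le_iff₀ (by positivity)] at hm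
    linarith
  have hm_pos : (0 : ℝ) < m := by nlinarith
  have hεt2 : ε ^ 2 < t ^ 2 := by gcongr
  rw [← exp_log (by positivity : (0 : ℝ) < n), ← exp_add, exp_lt_one_iff]
  nlinarith

/-- Lipton–Young style approximation: for an `n × n × n` game with payoffs in `[0,1]`
and any `ε > 0`, there are strategies for Players 2 and 3 mixing uniformly on
multisets of size `m = ⌈(ln n)/(2ε²)⌉` that guarantee the minmax value within `2ε`. -/
theorem simple_strategies_approximate_minmax (n : ℕ) (hn : 2 ≤ n)
    (u₁ : Fin n × Fin n × Fin n → ℝ)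
    (hu : ∀ x, u₁ x ∈ Set.Icc (0 : ℝ) 1) (ε : ℝ) (hε : 0 < ε) :
    ∃ f₂ f₃ : Fin (⌈Real.log n / (2 * ε ^ 2)⌉₊) → Fin n,
      (⨆ a : Fin n, ∑ j : Fin n, ∑ k : Fin n,
        (((Finset.univ.filter fun t => f₂ t = j).card : ℝ) /
            (⌈Real.log n / (2 * ε ^ 2)⌉₊ : ℝ)) *
        (((Finset.univ.filter fun t => f₃ t = k).card : ℝ) /
            (⌈Real.log n / (2 * ε ^ 2)⌉₊ : ℝ)) * u₁ (a, j, k))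
      ≤ minmaxVal u₁ + 2 * ε := by
  set m := ⌈Real.log n / (2 * ε ^ 2)⌉₊
  have hm : 0 < m := Nat.ceil_pos.2 (div_pos (Real.log_pos (by exact_mod_cast hn)) (by positivity))
  have : Nonempty (Fin n) := ⟨⟨0, by omega⟩⟩
  obtain ⟨p, -, hp⟩ := Finset.exists_min_image Finset.univ
    (fun p : (Fin m → Fin n) × (Fin m → Fin n) =>
      ⨆ a, expectedPayoff u₁ (empiricalStrategy p.1) (empiricalStrategy p.2) a)
    Finset.univ_nonempty
  refine ⟨p.1, p.2, le_of_forall_pos_le_add fun δ hδ => ?_⟩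
  obtain ⟨σ₂, σ₃, hσ₂, hσ₃, hσ⟩ :=
    exists_expectedPayoff_lt_minmaxVal_add u₁ (by positivity : 0 < δ / 3)
  have hcard : (Fintype.card (Fin n) : ℝ) * exp (-2 * m * (ε + δ / 3) ^ 2) < 1 := by
    simpa using natCast_mul_exp_neg_lt_one hn hε (by linarith) (Nat.le_ceil _)
  obtain ⟨f₂, f₃, hf⟩ := exists_expectedPayoff_empiricalStrategy_lt hu hσ₂ hσ₃
    (fun a => (hσ a).le) hm (by positivity) hcard
  calc _ ≤ _ := hp (f₂, f₃) (Finset.mem_univ _)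
    _ ≤ minmaxVal u₁ + δ / 3 + 2 * (ε + δ / 3) := ciSup_le fun a => (hf a).le
    _ = minmaxVal u₁ + 2 * ε + δ := by ring
end

section
/- For all integers m ≥ 1 and c with 1 ≤ c ≤ m, and every real number n ≥ 1 satisfying n < (C(m+1,c))², one has (c/m)² ≤ 4e² · n^{−1/c}. -/
/-!
Since `C(n, k) ≤ n^k / k!` and `k^k / k! ≤ e^k` (a single term of the series of `e^k`), one has
`C(m+1, c) ≤ (e(m+1)/c)^c`. Hence `n < C(m+1, c)^2` gives `n^{1/c} ≤ (e(m+1)/c)^2`, i.e.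
`n^{-1/c} ≥ (c / (e(m+1)))^2`, and `(c/m)^2 ≤ 4 (c/(m+1))^2` because `m + 1 ≤ 2m`.
-/

open Real

theorem Nat.choose_le_exp_mul_div_pow (n k : ℕ) : (n.choose k : ℝ) ≤ (exp 1 * n / k) ^ k := by
  rcases k.eq_zero_or_pos with rfl | hk
  · simp
  have hk₀ : (k : ℝ) ≠ 0 := by positivity
  calc (n.choose k : ℝ) ≤ (n : ℝ) ^ k / k.factorial := Nat.choose_le_pow_div k n
    _ = ((n : ℝ) / k) ^ k * ((k : ℝ) ^ k / k.factorial) := by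
      rw [div_pow]; field_simp
    _ ≤ ((n : ℝ) / k) ^ k * exp k := by gcongr; exact pow_div_factorial_le_exp _ k.cast_nonneg k
    _ = (exp 1 * n / k) ^ k := by rw [← exp_one_pow, mul_div_assoc, mul_pow, mul_comm]

theorem div_sq_le_four_mul_div_add_one_sq (x : ℝ) {y : ℝ} (hy : 1 ≤ y) :
    (x / y) ^ 2 ≤ 4 * (x / (y + 1)) ^ 2 := by
  rw [div_pow, div_pow, ← mul_div_assoc, div_le_div_iff₀ (by positivity) (by positivity)]
  nlinarith [sq_nonneg x, mul_nonneg (sq_nonneg x) (sub_nonneg.2 hy)]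

/-- If `1 ≤ c ≤ m` and `1 ≤ n < (C(m+1,c))²`, then `(c/m)² ≤ 4e²·n^{-1/c}`. -/
theorem ratio_sq_le_four_exp_sq_rpow (m c : ℕ) (hc : 1 ≤ c) (hcm : c ≤ m)
    (n : ℝ) (hn : 1 ≤ n) (hn' : n < ((m + 1).choose c : ℝ) ^ 2) :
    ((c : ℝ) / m) ^ 2 ≤ 4 * Real.exp 1 ^ 2 * n ^ (-(1 / (c : ℝ))) := by
  have hc₀ : (0 : ℝ) < c := by exact_mod_cast hc
  have hn₀ : 0 < n := one_pos.trans_le hn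
  set A : ℝ := exp 1 * (m + 1) / c
  have hchoose : ((m + 1).choose c : ℝ) ≤ A ^ c := by
    simpa [A] using Nat.choose_le_exp_mul_div_pow (m + 1) c
  have hroot : n ^ (1 / (c : ℝ)) ≤ A ^ 2 := by
    rw [one_div, rpow_inv_le_iff_of_pos hn₀.le (by positivity) hc₀, rpow_natCast, ← pow_mul,
      mul_comm, pow_mul]
    exact hn'.le.trans (pow_le_pow_left₀ (by positivity) hchoose 2)
  calc ((c : ℝ) / m) ^ 2 ≤ 4 * ((c : ℝ) / (m + 1)) ^ 2 :=
        div_sq_le_four_mul_div_add_one_sq _ (by exact_mod_cast hc.trans hcm)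
    _ = 4 * exp 1 ^ 2 * (A ^ 2)⁻¹ := by simp only [A]; field_simp
    _ ≤ 4 * exp 1 ^ 2 * n ^ (-(1 / (c : ℝ))) := by
        rw [rpow_neg hn₀.le]
        gcongr
end

section
/- For all integers n ≥ 1 and c ≥ 1 there exists a payoff function u₁ : Fin n × Fin n × Fin n → ℝ taking only the values 0 and 1 such that: (i) the minmax value for Player 1 of the three-player game with payoff u₁ is at most 4e² · n^{−1/c}; and (ii) for every pair of mixed strategies σ₂, σ₃ on Fin n whose supports each have cardinality at most c, there exists a pure strategy a ∈ Fin n of Player 1 with expected payoff ∑_{j,k} σ₂(j)·σ₃(k)·u₁(a,j,k) = 1. -/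
/-!
Let `q` be a prime and `P = 𝔽_q^c`. Player 1 names two affine hyperplanes of `P` and wins iff
Player 2's point lies on the first and Player 3's point on the second. Any `c` points of `P`
lie on a common hyperplane, so against supports of size at most `c` Player 1 wins with
certainty; but if Players 2 and 3 play uniformly on `P`, each hyperplane is hit with
probability `1/q`, so the minmax value is at most `1/q²`. Normalising one coefficient of the
equation to `1` leaves at most `c·q^c` equations, so the game fits into `n` strategies once
`(c·q^c)² ≤ n`; by Bertrand's postulate `q` can be chosen with moreover `n < (c·(2q)^c)²`, and
then `1/q² ≤ 4e²·n^(-1/c)` because `c ≤ e^c`. When `4e²·n^(-1/c) ≥ 1` the constant game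
`u₁ = 1` already works.
-/

open Finset

/-- `(l, v)` encodes the hyperplane `l ⬝ᵥ y = v`. Requiring some coefficient of `l` to be `1`
leaves at most `card ι` encodings of each hyperplane. -/
abbrev NormalizedHyperplane (ι F : Type*) [One F] := {l : ι → F // ∃ i, l i = 1} × F

section Hyperplanes

variable {ι F : Type*} [Field F] [Fintype F] [DecidableEq F] [Fintype ι]

theorem exists_ne_zero_forall_dotProduct_eq {s : Finset (ι → F)} (hs : s.Nonempty)
    (hcard : #s ≤ Fintype.card ι) : ∃ l ≠ 0, ∃ v : F, ∀ y ∈ s, l ⬝ᵥ y = v := by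
  obtain ⟨y₀, hy₀⟩ := hs
  let M : Matrix (s.erase y₀) ι F := .of fun y => y.1 - y₀
  have hker : LinearMap.ker M.mulVecLin ≠ ⊥ := LinearMap.ker_ne_bot_of_finrank_lt <| by
    simp only [Module.finrank_fintype_fun_eq_card, Fintype.card_coe, card_erase_of_mem hy₀]
    have := card_pos.mpr ⟨y₀, hy₀⟩
    omega
  obtain ⟨l, hlker, hl⟩ := Submodule.exists_mem_ne_zero_of_ne_bot hker
  refine ⟨l, hl, l ⬝ᵥ y₀, fun y hy => ?_⟩
  rcases eq_or_ne y y₀ with rfl | hne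
  · rfl
  · have h : (y - y₀) ⬝ᵥ l = 0 :=
      congrFun (LinearMap.mem_ker.mp hlker) ⟨y, mem_erase.mpr ⟨hne, hy⟩⟩
    rw [sub_dotProduct, sub_eq_zero] at h
    rwa [dotProduct_comm, dotProduct_comm l]

abbrev NormalizedHyperplane.Contains (H : NormalizedHyperplane ι F) (y : ι → F) : Prop :=
  H.1.1 ⬝ᵥ y = H.2

theorem NormalizedHyperplane.exists_forall_contains {s : Finset (ι → F)} (hs : s.Nonempty)
    (hcard : #s ≤ Fintype.card ι) : ∃ H : NormalizedHyperplane ι F, ∀ y ∈ s, H.Contains y := by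
  obtain ⟨l, hl, v, hv⟩ := exists_ne_zero_forall_dotProduct_eq hs hcard
  obtain ⟨i, hi⟩ := Function.ne_iff.mp hl
  refine ⟨⟨⟨(l i)⁻¹ • l, i, inv_mul_cancel₀ hi⟩, (l i)⁻¹ * v⟩, fun y hy => ?_⟩
  change ((l i)⁻¹ • l) ⬝ᵥ y = (l i)⁻¹ * v
  rw [smul_dotProduct, hv y hy, smul_eq_mul]

variable [DecidableEq ι]

theorem card_filter_dotProduct_eq_mul_card {l : ι → F} (hl : l ≠ 0) (v : F) :
    #{y | l ⬝ᵥ y = v} * Fintype.card F = Fintype.card F ^ Fintype.card ι := by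
  obtain ⟨i, hi⟩ := Function.ne_iff.mp hl
  let f : (ι → F) →+ F := AddMonoidHom.mk' (l ⬝ᵥ ·) (dotProduct_add l)
  have hf : ∀ w, w ∈ Set.range f := fun w =>
    ⟨Pi.single i (w / l i), by simp [f, dotProduct_single, mul_div_cancel₀ _ hi]⟩
  have hfiber : ∀ w, #{y | l ⬝ᵥ y = w} = #{y | l ⬝ᵥ y = v} := fun w =>
    AddMonoidHom.card_fiber_eq_of_mem_range f (hf w) (hf v)
  calc #{y | l ⬝ᵥ y = v} * Fintype.card F = ∑ w : F, #{y | l ⬝ᵥ y = w} := by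
        simp [hfiber, mul_comm]
    _ = Fintype.card F ^ Fintype.card ι := by
        rw [← card_eq_sum_card_fiberwise fun _ _ => mem_univ _, card_univ, Fintype.card_fun]

theorem NormalizedHyperplane.card_filter_contains_mul_card (H : NormalizedHyperplane ι F) :
    #{y | H.Contains y} * Fintype.card F = Fintype.card F ^ Fintype.card ι := by
  obtain ⟨⟨l, i, hi⟩, v⟩ := H
  exact card_filter_dotProduct_eq_mul_card (Function.ne_iff.mpr ⟨i, by simp [hi]⟩) v

theorem NormalizedHyperplane.card_le :
    Fintype.card (NormalizedHyperplane ι F) ≤ Fintype.card ι * Fintype.card F ^ Fintype.card ι := by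
  have hsub : ({l | ∃ i, l i = 1} : Finset (ι → F)) ⊆ univ.biUnion fun i => {l | l i = 1} := by
    intro l; simp
  have hcoord : ∀ i : ι, #({l | l i = 1} : Finset (ι → F)) * Fintype.card F =
      Fintype.card F ^ Fintype.card ι := fun i => by
    simpa [single_dotProduct] using
      card_filter_dotProduct_eq_mul_card (Pi.single_ne_zero_iff.mpr one_ne_zero) (1 : F)
        (l := Pi.single i 1)
  calc Fintype.card (NormalizedHyperplane ι F)
      = #({l | ∃ i, l i = 1} : Finset (ι → F)) * Fintype.card F := by
        simp [Fintype.card_subtype]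
    _ ≤ (∑ i : ι, #({l | l i = 1} : Finset (ι → F))) * Fintype.card F :=
        Nat.mul_le_mul_right _ ((card_le_card hsub).trans card_biUnion_le)
    _ = Fintype.card ι * Fintype.card F ^ Fintype.card ι := by
        simp [sum_mul, hcoord]

end Hyperplanes

section MixedStrategies

variable {S : Type*} [Fintype S]

theorem IsMixedStrategy.sum_filter_eq_one {σ : S → ℝ} (hσ : IsMixedStrategy σ) {p : S → Prop}
    [DecidablePred p] (hp : ∀ x, 0 < σ x → p x) : ∑ x with p x, σ x = 1 := by
  rw [sum_filter_of_ne fun x _ hx => hp x ((hσ.1 x).lt_of_ne' hx), hσ.2]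

theorem IsMixedStrategy.support_nonempty {σ : S → ℝ} (hσ : IsMixedStrategy σ) :
    ({x | 0 < σ x} : Finset S).Nonempty := by
  by_contra h
  have hzero : ∀ x, σ x = 0 := fun x =>
    (hσ.1 x).antisymm' (not_lt.mp fun hx => h ⟨x, by simpa using hx⟩)
  simpa [hzero] using hσ.2

variable [DecidableEq S]

noncomputable def uniformOn (s : Finset S) (x : S) : ℝ := if x ∈ s then (#s : ℝ)⁻¹ else 0

theorem isMixedStrategy_uniformOn {s : Finset S} (hs : s.Nonempty) :
    IsMixedStrategy (uniformOn s) := by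
  refine ⟨fun x => by unfold uniformOn; split_ifs <;> positivity, ?_⟩
  simp [uniformOn, sum_ite_mem, hs.card_pos.ne']

theorem sum_filter_uniformOn (s : Finset S) (p : S → Prop) [DecidablePred p] :
    ∑ x with p x, uniformOn s x = #{x ∈ s | p x} / #s := by
  simp [uniformOn, sum_ite_mem, div_eq_mul_inv, filter_inter]

end MixedStrategies

section Minmax

variable {S₁ S₂ S₃ : Type*} [Fintype S₁] [Fintype S₂] [Fintype S₃]

theorem minmaxVal_le [Nonempty S₁] {u : S₁ × S₂ × S₃ → ℝ} (hu : ∀ x, 0 ≤ u x)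
    {σ₂ : S₂ → ℝ} {σ₃ : S₃ → ℝ} (h₂ : IsMixedStrategy σ₂) (h₃ : IsMixedStrategy σ₃) {B : ℝ}
    (hB : ∀ a, ∑ j, ∑ k, σ₂ j * σ₃ k * u (a, j, k) ≤ B) : minmaxVal u ≤ B := by
  refine le_trans (csInf_le ⟨0, ?_⟩ ⟨σ₂, σ₃, h₂, h₃, rfl⟩) (ciSup_le hB)
  rintro _ ⟨τ₂, τ₃, hτ₂, hτ₃, rfl⟩
  obtain ⟨a⟩ := ‹Nonempty S₁›
  refine le_ciSup_of_le (Set.finite_range _).bddAbove a ?_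
  exact sum_nonneg fun j _ => sum_nonneg fun k _ =>
    mul_nonneg (mul_nonneg (hτ₂.1 j) (hτ₃.1 k)) (hu _)

theorem sum_sum_mul_mul_one {σ₂ : S₂ → ℝ} {σ₃ : S₃ → ℝ} (h₂ : IsMixedStrategy σ₂)
    (h₃ : IsMixedStrategy σ₃) : ∑ j, ∑ k, σ₂ j * σ₃ k * 1 = 1 := by
  simp [← sum_mul_sum, h₂.2, h₃.2]

theorem minmaxVal_one_le [Nonempty S₁] [Nonempty S₂] [Nonempty S₃] :
    minmaxVal (fun _ : S₁ × S₂ × S₃ => (1 : ℝ)) ≤ 1 := by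
  classical
  have h₂ := isMixedStrategy_uniformOn (univ_nonempty (α := S₂))
  have h₃ := isMixedStrategy_uniformOn (univ_nonempty (α := S₃))
  exact minmaxVal_le (fun _ => zero_le_one) h₂ h₃ fun _ => (sum_sum_mul_mul_one h₂ h₃).le

end Minmax

section HyperplaneGame

variable {ι F S₁ S₂ S₃ : Type*} [Field F] [DecidableEq F] [Fintype ι]

def hyperplaneGame (α : S₁ → NormalizedHyperplane ι F × NormalizedHyperplane ι F)
    (β₂ : S₂ → ι → F) (β₃ : S₃ → ι → F) (x : S₁ × S₂ × S₃) : ℝ :=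
  if (α x.1).1.Contains (β₂ x.2.1) ∧ (α x.1).2.Contains (β₃ x.2.2) then 1 else 0

variable {α : S₁ → NormalizedHyperplane ι F × NormalizedHyperplane ι F}
  {β₂ : S₂ → ι → F} {β₃ : S₃ → ι → F}

theorem hyperplaneGame_eq_zero_or_eq_one (x : S₁ × S₂ × S₃) :
    hyperplaneGame α β₂ β₃ x = 0 ∨ hyperplaneGame α β₂ β₃ x = 1 := by
  unfold hyperplaneGame
  split_ifs <;> simp

variable [Fintype S₂] [Fintype S₃]

theorem sum_sum_mul_hyperplaneGame (σ₂ : S₂ → ℝ) (σ₃ : S₃ → ℝ) (a : S₁) :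
    ∑ j, ∑ k, σ₂ j * σ₃ k * hyperplaneGame α β₂ β₃ (a, j, k) =
      (∑ j with (α a).1.Contains (β₂ j), σ₂ j) * ∑ k with (α a).2.Contains (β₃ k), σ₃ k := by
  simp only [hyperplaneGame, sum_filter, sum_mul_sum, ite_zero_mul_ite_zero, mul_boole]

variable [Fintype F]

theorem exists_sum_sum_mul_hyperplaneGame_eq_one (hα : Function.Surjective α)
    {σ₂ : S₂ → ℝ} {σ₃ : S₃ → ℝ} (h₂ : IsMixedStrategy σ₂) (h₃ : IsMixedStrategy σ₃)
    (hc₂ : #{j | 0 < σ₂ j} ≤ Fintype.card ι) (hc₃ : #{k | 0 < σ₃ k} ≤ Fintype.card ι) :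
    ∃ a, ∑ j, ∑ k, σ₂ j * σ₃ k * hyperplaneGame α β₂ β₃ (a, j, k) = 1 := by
  classical
  obtain ⟨H₂, hH₂⟩ := NormalizedHyperplane.exists_forall_contains
    (h₂.support_nonempty.image β₂) (card_image_le.trans hc₂)
  obtain ⟨H₃, hH₃⟩ := NormalizedHyperplane.exists_forall_contains
    (h₃.support_nonempty.image β₃) (card_image_le.trans hc₃)
  obtain ⟨a, ha⟩ := hα (H₂, H₃)
  refine ⟨a, ?_⟩
  rw [sum_sum_mul_hyperplaneGame, ha,
    h₂.sum_filter_eq_one fun j hj => hH₂ _ (mem_image_of_mem _ (by simpa using hj)),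
    h₃.sum_filter_eq_one fun k hk => hH₃ _ (mem_image_of_mem _ (by simpa using hk)), one_mul]

variable [DecidableEq ι]

theorem sum_filter_contains_uniformOn_map {S : Type*} [Fintype S] [DecidableEq S]
    (e : (ι → F) ↪ S) {β : S → ι → F} (hβ : Function.LeftInverse β e)
    (H : NormalizedHyperplane ι F) :
    ∑ j with H.Contains (β j), uniformOn (univ.map e) j = (Fintype.card F : ℝ)⁻¹ := by
  have hcard : (#{y | H.Contains y} : ℝ) * Fintype.card F = Fintype.card F ^ Fintype.card ι := by
    exact_mod_cast H.card_filter_contains_mul_card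
  have hq : (Fintype.card F : ℝ) ≠ 0 := by simp
  rw [sum_filter_uniformOn, filter_map, card_map, card_map, card_univ, Fintype.card_fun]
  simp only [Function.comp_def, hβ _]
  field_simp
  push_cast
  linear_combination hcard

theorem minmaxVal_hyperplaneGame_le [Fintype S₁] [Nonempty S₁]
    (e₂ : (ι → F) ↪ S₂) (hβ₂ : Function.LeftInverse β₂ e₂)
    (e₃ : (ι → F) ↪ S₃) (hβ₃ : Function.LeftInverse β₃ e₃) :
    minmaxVal (hyperplaneGame α β₂ β₃) ≤ ((Fintype.card F : ℝ) ^ 2)⁻¹ := by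
  classical
  refine minmaxVal_le (fun x => (hyperplaneGame_eq_zero_or_eq_one x).elim (·.ge) (· ▸ zero_le_one))
    (isMixedStrategy_uniformOn (univ_nonempty.map (f := e₂)))
    (isMixedStrategy_uniformOn (univ_nonempty.map (f := e₃))) fun a => ?_
  rw [sum_sum_mul_hyperplaneGame, sum_filter_contains_uniformOn_map e₂ hβ₂,
    sum_filter_contains_uniformOn_map e₃ hβ₃, sq, mul_inv]

end HyperplaneGame

section Construction

variable {ι F S₁ S₂ S₃ : Type*} [Field F] [Fintype F] [DecidableEq F] [Fintype ι] [DecidableEq ι]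
  [Fintype S₁] [Fintype S₂] [Fintype S₃]

theorem exists_zero_one_game_minmaxVal_le_inv_sq [Nonempty ι]
    (h₁ : (Fintype.card ι * Fintype.card F ^ Fintype.card ι) ^ 2 ≤ Fintype.card S₁)
    (h₂ : Fintype.card F ^ Fintype.card ι ≤ Fintype.card S₂)
    (h₃ : Fintype.card F ^ Fintype.card ι ≤ Fintype.card S₃) :
    ∃ u : S₁ × S₂ × S₃ → ℝ, (∀ x, u x = 0 ∨ u x = 1) ∧
      minmaxVal u ≤ ((Fintype.card F : ℝ) ^ 2)⁻¹ ∧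
      ∀ σ₂ σ₃, IsMixedStrategy σ₂ → IsMixedStrategy σ₃ →
        #{j | 0 < σ₂ j} ≤ Fintype.card ι → #{k | 0 < σ₃ k} ≤ Fintype.card ι →
        ∃ a, ∑ j, ∑ k, σ₂ j * σ₃ k * u (a, j, k) = 1 := by
  have : Nonempty (NormalizedHyperplane ι F) := ⟨⟨fun _ => 1, Classical.arbitrary ι, rfl⟩, 0⟩
  obtain ⟨e₁⟩ : Nonempty (NormalizedHyperplane ι F × NormalizedHyperplane ι F ↪ S₁) :=
    Function.Embedding.nonempty_of_card_le <| by
      rw [Fintype.card_prod, ← sq]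
      exact (Nat.pow_le_pow_left NormalizedHyperplane.card_le 2).trans h₁
  obtain ⟨e₂⟩ : Nonempty ((ι → F) ↪ S₂) :=
    Function.Embedding.nonempty_of_card_le (by simpa using h₂)
  obtain ⟨e₃⟩ : Nonempty ((ι → F) ↪ S₃) :=
    Function.Embedding.nonempty_of_card_le (by simpa using h₃)
  have : Nonempty S₁ := ⟨e₁ (Classical.arbitrary _)⟩
  exact ⟨hyperplaneGame (Function.invFun e₁) (Function.invFun e₂) (Function.invFun e₃),
    hyperplaneGame_eq_zero_or_eq_one,
    minmaxVal_hyperplaneGame_le e₂ (Function.leftInverse_invFun e₂.injective)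
      e₃ (Function.leftInverse_invFun e₃.injective),
    fun _ _ h₂ h₃ => exists_sum_sum_mul_hyperplaneGame_eq_one
      (Function.invFun_surjective e₁.injective) h₂ h₃⟩

end Construction

theorem exists_prime_apply_le_lt_apply_two_mul {f : ℕ → ℕ} (hf : StrictMono f) {n : ℕ}
    (h : f 2 ≤ n) : ∃ q, q.Prime ∧ f q ≤ n ∧ n < f (2 * q) := by
  classical
  set q := Nat.findGreatest (fun r => r.Prime ∧ f r ≤ n) n
  have hq : q.Prime ∧ f q ≤ n :=
    Nat.findGreatest_spec (P := fun r => r.Prime ∧ f r ≤ n) (m := 2) ((hf.id_le 2).trans h)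
      ⟨Nat.prime_two, h⟩
  obtain ⟨p, hp, hqp, hp2q⟩ := Nat.exists_prime_lt_and_le_two_mul q hq.1.ne_zero
  refine ⟨q, hq.1, hq.2, lt_of_lt_of_le ?_ (hf.monotone hp2q)⟩
  by_contra! hpn
  exact hqp.not_ge (Nat.le_findGreatest ((hf.id_le p).trans hpn) ⟨hp, hpn⟩)

theorem inv_le_mul_rpow_neg_one_div_of_le_pow {n K Y : ℝ} {c : ℕ} (hn : 0 < n) (hc : c ≠ 0)
    (hK : 0 ≤ K) (hY : 0 < Y) (h : n ≤ (K * Y) ^ c) : Y⁻¹ ≤ K * n ^ (-(1 / (c : ℝ))) := by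
  have hroot : n ^ (1 / (c : ℝ)) ≤ Y * K := calc
    n ^ (1 / (c : ℝ)) ≤ ((K * Y) ^ c) ^ (1 / (c : ℝ)) := by gcongr
    _ = Y * K := by rw [one_div, Real.pow_rpow_inv_natCast (by positivity) hc, mul_comm]
  rw [Real.rpow_neg hn.le, ← div_eq_mul_inv, le_div_iff₀ (by positivity), inv_mul_le_iff₀ hY]
  exact hroot

theorem cast_sq_mul_two_mul_pow_le (c r : ℕ) :
    (((c * (2 * r) ^ c) ^ 2 : ℕ) : ℝ) ≤ (4 * Real.exp 1 ^ 2 * r ^ 2) ^ c := by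
  have hc : (c : ℝ) ≤ Real.exp 1 ^ c := by
    rw [← Real.exp_nat_mul, mul_one]
    linarith [Real.add_one_le_exp c]
  push_cast
  calc ((c : ℝ) * (2 * r) ^ c) ^ 2
      = c ^ 2 * ((2 * r) ^ 2) ^ c := by rw [mul_pow, ← pow_mul, mul_comm c 2, pow_mul]
    _ ≤ (Real.exp 1 ^ c) ^ 2 * ((2 * r) ^ 2) ^ c := by gcongr
    _ = (4 * Real.exp 1 ^ 2 * r ^ 2) ^ c := by
      rw [← pow_mul, mul_comm c 2, pow_mul, ← mul_pow]
      congr 1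
      ring

theorem ne_zero_and_pow_lt_of_mul_rpow_neg_one_div_lt_one {n K : ℝ} {c : ℕ} (hn : 0 < n)
    (hK : 1 ≤ K) (h : K * n ^ (-(1 / (c : ℝ))) < 1) : c ≠ 0 ∧ K ^ c < n := by
  have hc : c ≠ 0 := by
    rintro rfl
    simp only [CharP.cast_eq_zero, div_zero, neg_zero, Real.rpow_zero, mul_one] at h
    linarith
  refine ⟨hc, lt_of_not_ge fun hle => h.not_ge ?_⟩
  simpa using inv_le_mul_rpow_neg_one_div_of_le_pow hn hc (by linarith) one_pos
    (by rwa [mul_one])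

theorem exists_prime_sq_mul_pow_le_and_inv_sq_le {n c : ℕ} (hc : c ≠ 0)
    (hn : (4 * Real.exp 1 ^ 2) ^ c < (n : ℝ)) :
    ∃ q, q.Prime ∧ (c * q ^ c) ^ 2 ≤ n ∧
      ((q : ℝ) ^ 2)⁻¹ ≤ 4 * Real.exp 1 ^ 2 * (n : ℝ) ^ (-(1 / (c : ℝ))) := by
  have htwo : (c * 2 ^ c) ^ 2 ≤ n := by
    have h := cast_sq_mul_two_mul_pow_le c 1
    simp only [Nat.cast_one, one_pow, mul_one] at h
    exact_mod_cast h.trans hn.le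
  obtain ⟨q, hq, hqn, hnq⟩ := exists_prime_apply_le_lt_apply_two_mul
    (f := fun r => (c * r ^ c) ^ 2) (fun a b hab => by dsimp only; gcongr) htwo
  have := hq.pos
  have hnq' : (n : ℝ) ≤ (4 * Real.exp 1 ^ 2 * (q : ℝ) ^ 2) ^ c :=
    ((Nat.cast_lt.mpr hnq).trans_le (cast_sq_mul_two_mul_pow_le c q)).le
  exact ⟨q, hq, hqn, inv_le_mul_rpow_neg_one_div_of_le_pow (hn.trans_le' (by positivity)) hc
    (by positivity) (by positivity) hnq'⟩

theorem small_support_cannot_approximate_general (n c : ℕ) (hn : 1 ≤ n) :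
    ∃ u₁ : Fin n × Fin n × Fin n → ℝ,
      (∀ x, u₁ x = 0 ∨ u₁ x = 1) ∧
      minmaxVal u₁ ≤ 4 * Real.exp 1 ^ 2 * (n : ℝ) ^ (-(1 / (c : ℝ))) ∧
      ∀ σ₂ σ₃ : Fin n → ℝ, IsMixedStrategy σ₂ → IsMixedStrategy σ₃ →
        (Finset.univ.filter fun s => 0 < σ₂ s).card ≤ c →
        (Finset.univ.filter fun s => 0 < σ₃ s).card ≤ c →
        ∃ a : Fin n, ∑ j : Fin n, ∑ k : Fin n, σ₂ j * σ₃ k * u₁ (a, j, k) = 1 := by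
  by_cases hbound : 1 ≤ 4 * Real.exp 1 ^ 2 * (n : ℝ) ^ (-(1 / (c : ℝ)))
  · have : Nonempty (Fin n) := ⟨⟨0, hn⟩⟩
    exact ⟨fun _ => 1, fun _ => Or.inr rfl, minmaxVal_one_le.trans hbound,
      fun _ _ h₂ h₃ _ _ => ⟨⟨0, hn⟩, sum_sum_mul_mul_one h₂ h₃⟩⟩
  obtain ⟨hc, hlarge⟩ := ne_zero_and_pow_lt_of_mul_rpow_neg_one_div_lt_one
    (by exact_mod_cast hn) (one_le_mul_of_one_le_of_one_le (by norm_num)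
      (one_le_pow₀ (Real.one_le_exp zero_le_one))) (not_le.mp hbound)
  obtain ⟨q, hq, hqn, hq_bound⟩ := exists_prime_sq_mul_pow_le_and_inv_sq_le hc hlarge
  have : Fact q.Prime := ⟨hq⟩
  have : Nonempty (Fin c) := ⟨⟨0, Nat.pos_of_ne_zero hc⟩⟩
  have hqc : q ^ c ≤ n := calc
    q ^ c ≤ c * q ^ c := Nat.le_mul_of_pos_left _ (Nat.pos_of_ne_zero hc)
    _ ≤ (c * q ^ c) ^ 2 := Nat.le_self_pow two_ne_zero _
    _ ≤ n := hqn
  obtain ⟨u, hu, hmin, hcover⟩ := exists_zero_one_game_minmaxVal_le_inv_sq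
    (ι := Fin c) (F := ZMod q) (S₁ := Fin n) (S₂ := Fin n) (S₃ := Fin n)
    (by simpa using hqn) (by simpa using hqc) (by simpa using hqc)
  exact ⟨u, hu, hmin.trans (by rwa [ZMod.card]), by simpa using hcover⟩

/-- For all `n, c ≥ 1` there is an `n × n × n` game with 0-1 payoffs whose minmax value
for Player 1 is at most `4e²·n^{-1/c}`, yet against every pair of mixed strategies of
Players 2 and 3 with supports of size at most `c`, Player 1 has a pure strategy with
expected payoff 1. -/
theorem small_support_cannot_approximate (n c : ℕ) (hn : 1 ≤ n) (hc : 1 ≤ c) :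
    ∃ u₁ : Fin n × Fin n × Fin n → ℝ,
      (∀ x, u₁ x = 0 ∨ u₁ x = 1) ∧
      minmaxVal u₁ ≤ 4 * Real.exp 1 ^ 2 * (n : ℝ) ^ (-(1 / (c : ℝ))) ∧
      ∀ σ₂ σ₃ : Fin n → ℝ, IsMixedStrategy σ₂ → IsMixedStrategy σ₃ →
        (Finset.univ.filter fun s => 0 < σ₂ s).card ≤ c →
        (Finset.univ.filter fun s => 0 < σ₃ s).card ≤ c →
        ∃ a : Fin n, ∑ j : Fin n, ∑ k : Fin n, σ₂ j * σ₃ k * u₁ (a, j, k) = 1 :=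
  small_support_cannot_approximate_general n c hn
end

section
/- Consider the three-player 3×2×2 game with Player 1's payoff u₁ : Fin 3 × Fin 2 × Fin 2 → ℝ given by: u₁(0,j,k) = 1 if j = 0 and k = 0 and 0 otherwise; u₁(1,j,k) = 1 if j = 1 and 0 otherwise; u₁(2,j,k) = 1 if k = 1 and 0 otherwise. All payoffs are 0 or 1. Then the minmax value for Player 1 equals (3 − √5)/2; in particular it is irrational. Equivalently, min over p,q ∈ [0,1] of max{p·q, 1−p, 1−q} equals (3 − √5)/2. -/
open Real goldenRatio

theorem ciSup_fin_three {α : Type*} [ConditionallyCompleteLattice α] (f : Fin 3 → α) :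
    ⨆ a, f a = f 0 ⊔ (f 1 ⊔ f 2) := by
  have hbdd := Finite.bddAbove_range f
  refine le_antisymm (ciSup_le fun a => ?_) ?_
  · fin_cases a
    exacts [le_sup_left, le_sup_left.trans le_sup_right, le_sup_right.trans le_sup_right]
  · exact sup_le (le_ciSup hbdd 0) (sup_le (le_ciSup hbdd 1) (le_ciSup hbdd 2))

theorem isMixedStrategy_fin_two_iff (σ : Fin 2 → ℝ) :
    IsMixedStrategy σ ↔ ∃ p ∈ Set.Icc (0 : ℝ) 1, σ = ![p, 1 - p] := by
  constructor
  · rintro ⟨hnonneg, hsum⟩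
    rw [Fin.sum_univ_two] at hsum
    refine ⟨σ 0, ⟨hnonneg 0, by linarith [hnonneg 1]⟩, ?_⟩
    ext i
    fin_cases i
    exacts [rfl, eq_sub_of_add_eq' hsum]
  · rintro ⟨p, ⟨hp0, hp1⟩, rfl⟩
    refine ⟨fun i => ?_, by simp [Fin.sum_univ_two]⟩
    fin_cases i
    exacts [hp0, sub_nonneg.mpr hp1]

def threatGame : Fin 3 × Fin 2 × Fin 2 → ℝ := fun p =>
  if p.1 = 0 then (if p.2.1 = 0 ∧ p.2.2 = 0 then (1 : ℝ) else 0)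
  else if p.1 = 1 then (if p.2.1 = 1 then (1 : ℝ) else 0)
  else (if p.2.2 = 1 then (1 : ℝ) else 0)

theorem bestResponse_threatGame (p q : ℝ) :
    ⨆ a, ∑ j, ∑ k, ![p, 1 - p] j * ![q, 1 - q] k * threatGame (a, j, k)
      = max (p * q) (max (1 - p) (1 - q)) := by
  rw [ciSup_fin_three]
  simp only [threatGame, Fin.sum_univ_two, Fin.isValue, Fin.reduceEq, ↓reduceIte, and_true,
    and_false, one_ne_zero, Matrix.cons_val_zero, Matrix.cons_val_one, Matrix.cons_val_fin_one,
    mul_one, mul_zero, add_zero, zero_add]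
  ring_nf

theorem minmaxVal_threatGame :
    minmaxVal threatGame = sInf { v : ℝ | ∃ p ∈ Set.Icc (0 : ℝ) 1, ∃ q ∈ Set.Icc (0 : ℝ) 1,
        v = max (p * q) (max (1 - p) (1 - q)) } := by
  unfold minmaxVal
  congr 1
  ext v
  simp only [isMixedStrategy_fin_two_iff, Set.mem_ofPred_eq]
  constructor
  · rintro ⟨_, _, ⟨p, hp, rfl⟩, ⟨q, hq, rfl⟩, rfl⟩
    exact ⟨p, hp, q, hq, bestResponse_threatGame p q⟩
  · rintro ⟨p, hp, q, hq, rfl⟩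
    exact ⟨_, _, ⟨p, hp, rfl⟩, ⟨q, hq, rfl⟩, (bestResponse_threatGame p q).symm⟩

theorem goldenConj_sq_le_max_mul_max_one_sub (p q : ℝ) :
    ψ ^ 2 ≤ max (p * q) (max (1 - p) (1 - q)) := by
  have hψ := goldenConj_neg
  rcases le_or_gt p (-ψ) with hp | hp
  · exact le_max_of_le_right (le_max_of_le_left (by linarith [goldenConj_sq]))
  rcases le_or_gt q (-ψ) with hq | hq
  · exact le_max_of_le_right (le_max_of_le_right (by linarith [goldenConj_sq]))
  refine le_max_of_le_left ?_
  calc ψ ^ 2 = -ψ * -ψ := by ring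
    _ ≤ p * q := mul_le_mul hp.le hq.le (by linarith) (by linarith)

theorem isLeast_max_mul_max_one_sub :
    IsLeast { v : ℝ | ∃ p ∈ Set.Icc (0 : ℝ) 1, ∃ q ∈ Set.Icc (0 : ℝ) 1,
        v = max (p * q) (max (1 - p) (1 - q)) } (ψ ^ 2) := by
  refine ⟨?_, ?_⟩
  · have hg : -ψ ∈ Set.Icc (0 : ℝ) 1 :=
      ⟨by linarith [goldenConj_neg], by linarith [neg_one_lt_goldenConj]⟩
    refine ⟨-ψ, hg, -ψ, hg, ?_⟩
    rw [neg_mul_neg, ← sq, sub_neg_eq_add, add_comm, ← goldenConj_sq, max_self, max_self]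
  · rintro v ⟨p, -, q, -, rfl⟩
    exact goldenConj_sq_le_max_mul_max_one_sub p q

theorem goldenConj_sq_eq : ψ ^ 2 = (3 - √5) / 2 := by
  rw [goldenConj_sq]
  ring

/-- The `3 × 2 × 2` game with 0-1 payoffs `u₁(0,j,k) = [j = 0 ∧ k = 0]`,
`u₁(1,j,k) = [j = 1]`, `u₁(2,j,k) = [k = 1]` has minmax value `(3 - √5)/2` for
Player 1, which is irrational; equivalently,
`min_{p,q ∈ [0,1]} max {pq, 1-p, 1-q} = (3 - √5)/2`. -/
theorem minmax_irrational_two_payoffs :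
    minmaxVal (fun p : Fin 3 × Fin 2 × Fin 2 =>
        if p.1 = 0 then (if p.2.1 = 0 ∧ p.2.2 = 0 then (1 : ℝ) else 0)
        else if p.1 = 1 then (if p.2.1 = 1 then (1 : ℝ) else 0)
        else (if p.2.2 = 1 then (1 : ℝ) else 0))
      = (3 - Real.sqrt 5) / 2 ∧
    Irrational ((3 - Real.sqrt 5) / 2) ∧
    sInf { v : ℝ | ∃ p ∈ Set.Icc (0 : ℝ) 1, ∃ q ∈ Set.Icc (0 : ℝ) 1,
        v = max (p * q) (max (1 - p) (1 - q)) } = (3 - Real.sqrt 5) / 2 := by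
  have hmin := goldenConj_sq_eq ▸ isLeast_max_mul_max_one_sub.csInf_eq
  refine ⟨minmaxVal_threatGame.trans hmin, ?_, hmin⟩
  rw [← goldenConj_sq_eq, goldenConj_sq]
  exact_mod_cast goldenConj_irrational.add_natCast 1
end

section
/- Let S₂, S₃ be nonempty finite strategy sets and let u₁ : Fin 2 × S₂ × S₃ → ℝ take only the values 0 and 1. If either (a) there exist j ∈ S₂ and k, k' ∈ S₃ with u₁(0,j,k) = 0 and u₁(1,j,k') = 0, or (b) there exist k ∈ S₃ and j, j' ∈ S₂ with u₁(0,j,k) = 0 and u₁(1,j',k) = 0, then the minmax value for Player 1 is at most 1/2. -/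
open Finset

section

variable {S₁ S₂ S₃ : Type*} [Fintype S₂] [Fintype S₃]

def mixedPayoff (u : S₁ × S₂ × S₃ → ℝ) (σ₂ : S₂ → ℝ) (σ₃ : S₃ → ℝ) (a : S₁) : ℝ :=
  ∑ j, ∑ k, σ₂ j * σ₃ k * u (a, j, k)

theorem le_mixedPayoff {u : S₁ × S₂ × S₃ → ℝ} {c : ℝ} (hu : ∀ x, c ≤ u x)
    {σ₂ : S₂ → ℝ} {σ₃ : S₃ → ℝ} (hσ₂ : IsMixedStrategy σ₂) (hσ₃ : IsMixedStrategy σ₃)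
    (a : S₁) : c ≤ mixedPayoff u σ₂ σ₃ a :=
  calc c = ∑ j, ∑ k, σ₂ j * σ₃ k * c := by
        simp only [← sum_mul, ← mul_sum, hσ₂.2, hσ₃.2, one_mul]
    _ ≤ mixedPayoff u σ₂ σ₃ a := sum_le_sum fun j _ => sum_le_sum fun k _ =>
        mul_le_mul_of_nonneg_left (hu _) (mul_nonneg (hσ₂.1 j) (hσ₃.1 k))

theorem minmaxVal_le_iSup_mixedPayoff [Fintype S₁] [Nonempty S₁] (u : S₁ × S₂ × S₃ → ℝ)
    {σ₂ : S₂ → ℝ} {σ₃ : S₃ → ℝ} (hσ₂ : IsMixedStrategy σ₂) (hσ₃ : IsMixedStrategy σ₃) :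
    minmaxVal u ≤ ⨆ a, mixedPayoff u σ₂ σ₃ a := by
  obtain ⟨c, hc⟩ := (Set.finite_range u).bddBelow
  refine csInf_le ⟨c, ?_⟩ ⟨σ₂, σ₃, hσ₂, hσ₃, rfl⟩
  rintro v ⟨τ₂, τ₃, hτ₂, hτ₃, rfl⟩
  exact (le_mixedPayoff (fun x => hc ⟨x, rfl⟩) hτ₂ hτ₃ (Classical.arbitrary S₁)).trans
    (le_ciSup (Set.finite_range _).bddAbove _)

theorem mixedPayoff_swap (u : S₁ × S₂ × S₃ → ℝ) (σ₂ : S₂ → ℝ) (σ₃ : S₃ → ℝ) (a : S₁) :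
    mixedPayoff (fun x : S₁ × S₃ × S₂ => u (x.1, x.2.2, x.2.1)) σ₃ σ₂ a =
      mixedPayoff u σ₂ σ₃ a := by
  rw [mixedPayoff, sum_comm]
  simp only [mixedPayoff, mul_comm (σ₃ _)]

theorem minmaxVal_swap [Fintype S₁] (u : S₁ × S₂ × S₃ → ℝ) :
    minmaxVal (fun x : S₁ × S₃ × S₂ => u (x.1, x.2.2, x.2.1)) = minmaxVal u := by
  refine congrArg sInf (Set.ext fun v => ⟨?_, ?_⟩)
  · rintro ⟨σ₃, σ₂, hσ₃, hσ₂, rfl⟩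
    exact ⟨σ₂, σ₃, hσ₂, hσ₃, iSup_congr (mixedPayoff_swap u σ₂ σ₃)⟩
  · rintro ⟨σ₂, σ₃, hσ₂, hσ₃, rfl⟩
    exact ⟨σ₃, σ₂, hσ₃, hσ₂, (iSup_congr (mixedPayoff_swap u σ₂ σ₃)).symm⟩

theorem isMixedStrategy_single [DecidableEq S₂] (j : S₂) :
    IsMixedStrategy (Pi.single j 1 : S₂ → ℝ) :=
  ⟨fun s => by simp only [Pi.single_apply]; positivity, by simp⟩

theorem isMixedStrategy_half_add_half [DecidableEq S₃] (k k' : S₃) :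
    IsMixedStrategy (Pi.single k (1 / 2) + Pi.single k' (1 / 2) : S₃ → ℝ) := by
  refine ⟨fun s => ?_, ?_⟩
  · simp only [Pi.add_apply, Pi.single_apply]
    positivity
  · simp only [Pi.add_apply, sum_add_distrib, sum_pi_single', mem_univ, if_true]
    norm_num

theorem mixedPayoff_single_half_add_half [DecidableEq S₂] [DecidableEq S₃]
    (u : S₁ × S₂ × S₃ → ℝ) (j : S₂) (k k' : S₃) (a : S₁) :
    mixedPayoff u (Pi.single j 1) (Pi.single k (1 / 2) + Pi.single k' (1 / 2)) a =
      (u (a, j, k) + u (a, j, k')) / 2 := by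
  simp only [mixedPayoff, Pi.add_apply, mul_add, add_mul, sum_add_distrib, Pi.single_apply,
    ite_mul, mul_ite, one_mul, zero_mul, mul_zero, sum_ite_eq', mem_univ, if_true]
  ring

end

theorem minmaxVal_le_half_of_pure_matching_pennies {S₂ S₃ : Type*} [Fintype S₂] [Fintype S₃]
    {u : Fin 2 × S₂ × S₃ → ℝ} (hu : ∀ x, u x ≤ 1) {j : S₂} {k k' : S₃}
    (h0 : u (0, j, k) = 0) (h1 : u (1, j, k') = 0) : minmaxVal u ≤ 1 / 2 := by
  classical
  refine (minmaxVal_le_iSup_mixedPayoff u (isMixedStrategy_single j)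
    (isMixedStrategy_half_add_half k k')).trans (ciSup_le (Fin.forall_fin_two.2 ⟨?_, ?_⟩))
  all_goals rw [mixedPayoff_single_half_add_half]
  · linarith [hu (0, j, k')]
  · linarith [hu (1, j, k)]

theorem minmax_le_half_of_matching_pennies_general {S₂ S₃ : Type*} [Fintype S₂] [Fintype S₃]
    (u₁ : Fin 2 × S₂ × S₃ → ℝ) (h01 : ∀ x, u₁ x = 0 ∨ u₁ x = 1)
    (h : (∃ (j : S₂) (k k' : S₃), u₁ (0, j, k) = 0 ∧ u₁ (1, j, k') = 0) ∨
         (∃ (k : S₃) (j j' : S₂), u₁ (0, j, k) = 0 ∧ u₁ (1, j', k) = 0)) :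
    minmaxVal u₁ ≤ 1 / 2 := by
  have hu₁ : ∀ x, u₁ x ≤ 1 := fun x => by rcases h01 x with hx | hx <;> simp [hx]
  rcases h with ⟨j, k, k', h0, h1⟩ | ⟨k, j, j', h0, h1⟩
  · exact minmaxVal_le_half_of_pure_matching_pennies hu₁ h0 h1
  · rw [← minmaxVal_swap]
    exact minmaxVal_le_half_of_pure_matching_pennies (fun x => hu₁ _) h0 h1

/-- Cases 3 and 4: if one bully has a pure strategy letting the other play matching
pennies against Player 1, the minmax value for Player 1 is at most 1/2 in a 0-1 game. -/
theorem minmax_le_half_of_matching_pennies {S₂ S₃ : Type*} [Fintype S₂] [Fintype S₃]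
    [Nonempty S₂] [Nonempty S₃]
    (u₁ : Fin 2 × S₂ × S₃ → ℝ) (h01 : ∀ x, u₁ x = 0 ∨ u₁ x = 1)
    (h : (∃ (j : S₂) (k k' : S₃), u₁ (0, j, k) = 0 ∧ u₁ (1, j, k') = 0) ∨
         (∃ (k : S₃) (j j' : S₂), u₁ (0, j, k) = 0 ∧ u₁ (1, j', k) = 0)) :
    minmaxVal u₁ ≤ 1 / 2 :=
  minmax_le_half_of_matching_pennies_general u₁ h01 h
end

section
/- Let S₂, S₃ be nonempty finite strategy sets and let u₁ : Fin 2 × S₂ × S₃ → ℝ take only the values 0 and 1. Suppose (H1) for every i ∈ Fin 2 there exist j ∈ S₂ and k ∈ S₃ with u₁(i,j,k) = 0, and (H2) whenever u₁(i,j,k) = 0, then u₁(i',j',k) = 1 and u₁(i',j,k') = 1 for the other action i' ≠ i of Player 1 and all j' ∈ S₂, k' ∈ S₃. Then the minmax value for Player 1 equals 3/4. -/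
open Finset

lemma ciSup_fin_two (f : Fin 2 → ℝ) : ⨆ a, f a = max (f 0) (f 1) := by
  apply le_antisymm
  · exact ciSup_le fun a => by fin_cases a <;> simp
  · exact max_le (le_ciSup (Set.finite_range f).bddAbove 0)
      (le_ciSup (Set.finite_range f).bddAbove 1)

lemma three_quarters_le_max_one_sub_mul {x₀ x₁ y₀ y₁ : ℝ} (hx₀ : 0 ≤ x₀) (hx₁ : 0 ≤ x₁)
    (hy₀ : 0 ≤ y₀) (hy₁ : 0 ≤ y₁) (hx : x₀ + x₁ ≤ 1) (hy : y₀ + y₁ ≤ 1) :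
    3 / 4 ≤ max (1 - x₀ * y₀) (1 - x₁ * y₁) := by
  have hxx : x₀ * x₁ ≤ 1 / 4 := by nlinarith [sq_nonneg (x₀ - x₁)]
  have hyy : y₀ * y₁ ≤ 1 / 4 := by nlinarith [sq_nonneg (y₀ - y₁)]
  have hprod : (x₀ * y₀) * (x₁ * y₁) ≤ 1 / 4 * (1 / 4) := by
    calc (x₀ * y₀) * (x₁ * y₁) = (x₀ * x₁) * (y₀ * y₁) := by ring
      _ ≤ 1 / 4 * (1 / 4) := mul_le_mul hxx hyy (by positivity) (by norm_num)
  by_contra! h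
  rw [max_lt_iff] at h
  nlinarith [mul_nonneg hx₀ hy₀, mul_nonneg hx₁ hy₁]

section Product

variable {S T : Type*} [Fintype S] [Fintype T] {σ : S → ℝ} {τ : T → ℝ}

lemma one_sub_mul_le_sum_sum (hσ : IsMixedStrategy σ) (hτ : IsMixedStrategy τ)
    (A : Finset S) (B : Finset T) (w : S → T → ℝ) (hw₀ : ∀ j k, 0 ≤ w j k)
    (hw₁ : ∀ j k, w j k < 1 → j ∈ A ∧ k ∈ B) :
    1 - (∑ j ∈ A, σ j) * (∑ k ∈ B, τ k) ≤ ∑ j, ∑ k, σ j * τ k * w j k := by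
  classical
  have hsplit : 1 - (∑ j ∈ A, σ j) * (∑ k ∈ B, τ k)
      = ∑ j, ∑ k, (σ j * τ k - (if j ∈ A then σ j else 0) * (if k ∈ B then τ k else 0)) := by
    simp only [sum_sub_distrib, ← sum_mul_sum, sum_ite_mem, univ_inter, hσ.2, hτ.2, one_mul]
  rw [hsplit]
  refine sum_le_sum fun j _ => sum_le_sum fun k _ => ?_
  have hστ : 0 ≤ σ j * τ k := mul_nonneg (hσ.1 j) (hτ.1 k)
  by_cases hjk : j ∈ A ∧ k ∈ B
  · simpa [hjk.1, hjk.2] using mul_nonneg hστ (hw₀ j k)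
  · have h0 : (if j ∈ A then σ j else 0) * (if k ∈ B then τ k else 0) = 0 := by
      rcases not_and_or.mp hjk with h | h <;> simp [h]
    rw [h0, sub_zero]
    exact le_mul_of_one_le_right hστ (not_lt.mp (mt (hw₁ j k) hjk))

lemma IsMixedStrategy.sum_add_sum_le_one (hσ : IsMixedStrategy σ) {A B : Finset S}
    (hAB : Disjoint A B) : ∑ j ∈ A, σ j + ∑ j ∈ B, σ j ≤ 1 := by
  classical
  rw [← sum_union hAB, ← hσ.2]
  exact sum_le_univ_sum_of_nonneg hσ.1

end Product

section HalfMix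

variable {S : Type*} [DecidableEq S]

/-- `δ_a / 2 + δ_b / 2`, which is the point mass `δ_a` when `a = b`. -/
noncomputable def halfMix (a b : S) (s : S) : ℝ :=
  (if s = a then 1 / 2 else 0) + (if s = b then 1 / 2 else 0)

lemma halfMix_comm (a b : S) : halfMix a b = halfMix b a :=
  funext fun _ => add_comm _ _

variable [Fintype S]

lemma sum_halfMix_mul (a b : S) (g : S → ℝ) : ∑ s, halfMix a b s * g s = (g a + g b) / 2 := by
  simp only [halfMix, add_mul, ite_mul, zero_mul, sum_add_distrib, sum_ite_eq', mem_univ,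
    if_true]
  ring

lemma isMixedStrategy_halfMix (a b : S) : IsMixedStrategy (halfMix a b) :=
  ⟨fun s => by unfold halfMix; positivity, by simpa using sum_halfMix_mul a b 1⟩

variable {T : Type*} [Fintype T] [DecidableEq T]

lemma sum_sum_halfMix_mul (j₀ j₁ : S) (k₀ k₁ : T) (w : S → T → ℝ) :
    ∑ j, ∑ k, halfMix j₀ j₁ j * halfMix k₀ k₁ k * w j k
      = (w j₀ k₀ + w j₀ k₁ + w j₁ k₀ + w j₁ k₁) / 4 := by
  simp only [mul_assoc, ← mul_sum, sum_halfMix_mul]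
  ring

end HalfMix

section ZeroEntries

variable {S₁ S₂ S₃ : Type*} [Fintype S₂] [Fintype S₃]

open Classical in
noncomputable def zeroRows (u : S₁ × S₂ × S₃ → ℝ) (i : S₁) : Finset S₂ :=
  {j | ∃ k, u (i, j, k) = 0}

open Classical in
noncomputable def zeroCols (u : S₁ × S₂ × S₃ → ℝ) (i : S₁) : Finset S₃ :=
  {k | ∃ j, u (i, j, k) = 0}

variable {u : S₁ × S₂ × S₃ → ℝ} {i i' : S₁}

lemma mem_zeroRows {j : S₂} : j ∈ zeroRows u i ↔ ∃ k, u (i, j, k) = 0 := by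
  simp [zeroRows]

lemma mem_zeroCols {k : S₃} : k ∈ zeroCols u i ↔ ∃ j, u (i, j, k) = 0 := by
  simp [zeroCols]

lemma disjoint_zeroRows
    (H2 : ∀ (i i' : S₁) (j : S₂) (k : S₃), u (i, j, k) = 0 → i' ≠ i →
      ∀ (j' : S₂) (k' : S₃), u (i', j', k) = 1 ∧ u (i', j, k') = 1)
    (hi : i ≠ i') : Disjoint (zeroRows u i) (zeroRows u i') := by
  refine disjoint_left.mpr fun j hj hj' => ?_
  obtain ⟨k, hk⟩ := mem_zeroRows.mp hj
  obtain ⟨k', hk'⟩ := mem_zeroRows.mp hj'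
  simp [(H2 i i' j k hk hi.symm j k').2] at hk'

lemma disjoint_zeroCols
    (H2 : ∀ (i i' : S₁) (j : S₂) (k : S₃), u (i, j, k) = 0 → i' ≠ i →
      ∀ (j' : S₂) (k' : S₃), u (i', j', k) = 1 ∧ u (i', j, k') = 1)
    (hi : i ≠ i') : Disjoint (zeroCols u i) (zeroCols u i') := by
  refine disjoint_left.mpr fun k hk hk' => ?_
  obtain ⟨j, hj⟩ := mem_zeroCols.mp hk
  obtain ⟨j', hj'⟩ := mem_zeroCols.mp hk'
  simp [(H2 i i' j k hj hi.symm j' k).1] at hj'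

lemma one_sub_mul_le_payoff (h01 : ∀ x, u x = 0 ∨ u x = 1) {σ₂ : S₂ → ℝ} {σ₃ : S₃ → ℝ}
    (hσ₂ : IsMixedStrategy σ₂) (hσ₃ : IsMixedStrategy σ₃) (i : S₁) :
    1 - (∑ j ∈ zeroRows u i, σ₂ j) * (∑ k ∈ zeroCols u i, σ₃ k)
      ≤ ∑ j, ∑ k, σ₂ j * σ₃ k * u (i, j, k) := by
  refine one_sub_mul_le_sum_sum hσ₂ hσ₃ _ _ _ (fun j k => ?_) (fun j k hlt => ?_)
  · rcases h01 (i, j, k) with h | h <;> simp [h]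
  · have h : u (i, j, k) = 0 := (h01 _).resolve_right hlt.ne
    exact ⟨mem_zeroRows.mpr ⟨k, h⟩, mem_zeroCols.mpr ⟨j, h⟩⟩

lemma payoff_halfMix_eq_three_quarters
    (H2 : ∀ (i i' : S₁) (j : S₂) (k : S₃), u (i, j, k) = 0 → i' ≠ i →
      ∀ (j' : S₂) (k' : S₃), u (i', j', k) = 1 ∧ u (i', j, k') = 1)
    [DecidableEq S₂] [DecidableEq S₃] (hi : i ≠ i') {j j' : S₂} {k k' : S₃}
    (h : u (i, j, k) = 0) (h' : u (i', j', k') = 0) :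
    ∑ s, ∑ t, halfMix j j' s * halfMix k k' t * u (i, s, t) = 3 / 4 := by
  rw [sum_sum_halfMix_mul, h, (H2 i' i j' k' h' hi j k).2, (H2 i' i j' k' h' hi j k').1,
    (H2 i' i j' k' h' hi j' k').1]
  norm_num

end ZeroEntries

lemma three_quarters_le_max_payoff {S₂ S₃ : Type*} [Fintype S₂] [Fintype S₃]
    {u : Fin 2 × S₂ × S₃ → ℝ} (h01 : ∀ x, u x = 0 ∨ u x = 1)
    (H2 : ∀ (i i' : Fin 2) (j : S₂) (k : S₃), u (i, j, k) = 0 → i' ≠ i →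
      ∀ (j' : S₂) (k' : S₃), u (i', j', k) = 1 ∧ u (i', j, k') = 1)
    {σ₂ : S₂ → ℝ} {σ₃ : S₃ → ℝ} (hσ₂ : IsMixedStrategy σ₂) (hσ₃ : IsMixedStrategy σ₃) :
    3 / 4 ≤ ⨆ a : Fin 2, ∑ j, ∑ k, σ₂ j * σ₃ k * u (a, j, k) := by
  rw [ciSup_fin_two]
  calc (3 : ℝ) / 4
      ≤ max (1 - (∑ j ∈ zeroRows u 0, σ₂ j) * (∑ k ∈ zeroCols u 0, σ₃ k))
          (1 - (∑ j ∈ zeroRows u 1, σ₂ j) * (∑ k ∈ zeroCols u 1, σ₃ k)) :=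
        three_quarters_le_max_one_sub_mul (sum_nonneg fun j _ => hσ₂.1 j)
          (sum_nonneg fun j _ => hσ₂.1 j) (sum_nonneg fun k _ => hσ₃.1 k)
          (sum_nonneg fun k _ => hσ₃.1 k)
          (hσ₂.sum_add_sum_le_one (disjoint_zeroRows H2 zero_ne_one))
          (hσ₃.sum_add_sum_le_one (disjoint_zeroCols H2 zero_ne_one))
    _ ≤ _ :=
        max_le_max (one_sub_mul_le_payoff h01 hσ₂ hσ₃ 0) (one_sub_mul_le_payoff h01 hσ₂ hσ₃ 1)

theorem minmax_eq_three_quarters_general {S₂ S₃ : Type*} [Fintype S₂] [Fintype S₃]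
    (u₁ : Fin 2 × S₂ × S₃ → ℝ) (h01 : ∀ x, u₁ x = 0 ∨ u₁ x = 1)
    (H1 : ∀ i : Fin 2, ∃ (j : S₂) (k : S₃), u₁ (i, j, k) = 0)
    (H2 : ∀ (i i' : Fin 2) (j : S₂) (k : S₃), u₁ (i, j, k) = 0 → i' ≠ i →
      ∀ (j' : S₂) (k' : S₃), u₁ (i', j', k) = 1 ∧ u₁ (i', j, k') = 1) :
    minmaxVal u₁ = 3 / 4 := by
  classical
  obtain ⟨j₀, k₀, h₀⟩ := H1 0
  obtain ⟨j₁, k₁, h₁⟩ := H1 1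
  have hattained :
      ⨆ a : Fin 2, ∑ j, ∑ k, halfMix j₀ j₁ j * halfMix k₀ k₁ k * u₁ (a, j, k) = 3 / 4 := by
    rw [ciSup_fin_two, payoff_halfMix_eq_three_quarters H2 zero_ne_one h₀ h₁, halfMix_comm j₀,
      halfMix_comm k₀, payoff_halfMix_eq_three_quarters H2 one_ne_zero h₁ h₀, max_self]
  refine IsLeast.csInf_eq ⟨⟨_, _, isMixedStrategy_halfMix j₀ j₁, isMixedStrategy_halfMix k₀ k₁,
    hattained.symm⟩, ?_⟩
  rintro v ⟨σ₂, σ₃, hσ₂, hσ₃, rfl⟩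
  exact three_quarters_le_max_payoff h01 H2 hσ₂ hσ₃

/-- Case 5: in a 0-1 game where Player 1 has two actions, if each action of Player 1 can
be punished (H1) but any zero entry forces all entries with the other action of Player 1
in the same row or column to be 1 (H2), then the minmax value for Player 1 is 3/4. -/
theorem minmax_eq_three_quarters {S₂ S₃ : Type*} [Fintype S₂] [Fintype S₃]
    [Nonempty S₂] [Nonempty S₃]
    (u₁ : Fin 2 × S₂ × S₃ → ℝ) (h01 : ∀ x, u₁ x = 0 ∨ u₁ x = 1)
    (H1 : ∀ i : Fin 2, ∃ (j : S₂) (k : S₃), u₁ (i, j, k) = 0)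
    (H2 : ∀ (i i' : Fin 2) (j : S₂) (k : S₃), u₁ (i, j, k) = 0 → i' ≠ i →
      ∀ (j' : S₂) (k' : S₃), u₁ (i', j', k) = 1 ∧ u₁ (i', j, k') = 1) :
    minmaxVal u₁ = 3 / 4 :=
  minmax_eq_three_quarters_general u₁ h01 H1 H2
end
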